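/- arXiv:1310.2680 — 7 statements merged into one kernel-verified Lean document; each statement's English description precedes it below -/
import Mathlib

section
/- For all real x ≥ 0 and ε ∈ [0,1], one has e^{εx} + e^{-εx} - 2 ≤ ε²(e^x + e^{-x} - 2). -/
/-!
Compare the Taylor series of `cosh` term by term: the `n`-th term of `cosh (ε * x)` is
`ε ^ (2 * n)` times that of `cosh x`, and `ε ^ (2 * n) ≤ ε ^ 2` for `n ≥ 1` when `|ε| ≤ 1`.
-/

open Nat Real

theorem Real.cosh_mul_le {ε : ℝ} (hε : |ε| ≤ 1) (x : ℝ) :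
    cosh (ε * x) ≤ ε ^ 2 * cosh x + (1 - ε ^ 2) := by
  have hε2 : ε ^ 2 ≤ 1 := by simpa using sq_le_one_iff_abs_le_one ε |>.2 hε
  have hsum : HasSum (fun n ↦ ε ^ 2 * (x ^ (2 * n) / (2 * n)!) + if n = 0 then 1 - ε ^ 2 else 0)
      (ε ^ 2 * cosh x + (1 - ε ^ 2)) :=
    ((hasSum_cosh x).mul_left _).add (hasSum_ite_eq 0 _)
  refine hasSum_le (fun n ↦ ?_) (hasSum_cosh (ε * x)) hsum
  rcases n with _ | n
  · simp
  · have hpow : (ε ^ 2) ^ (n + 1) ≤ ε ^ 2 := pow_le_of_le_one (sq_nonneg ε) hε2 n.succ_ne_zero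
    have hterm : 0 ≤ x ^ (2 * (n + 1)) / (2 * (n + 1))! :=
      div_nonneg ((even_two_mul _).pow_nonneg x) (by positivity)
    rw [mul_pow, pow_mul ε, mul_div_assoc, if_neg n.succ_ne_zero, add_zero]
    exact mul_le_mul_of_nonneg_right hpow hterm

theorem exp_cosh_ineq_general (x ε : ℝ) (hε0 : 0 ≤ ε) (hε1 : ε ≤ 1) :
    Real.exp (ε * x) + Real.exp (-(ε * x)) - 2 ≤
      ε ^ 2 * (Real.exp x + Real.exp (-x) - 2) := by
  have h := cosh_mul_le (abs_le.2 ⟨by linarith, hε1⟩) x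
  rw [cosh_eq, cosh_eq] at h
  linarith

theorem exp_cosh_ineq (x ε : ℝ) (hx : 0 ≤ x) (hε0 : 0 ≤ ε) (hε1 : ε ≤ 1) :
    Real.exp (ε * x) + Real.exp (-(ε * x)) - 2 ≤
      ε ^ 2 * (Real.exp x + Real.exp (-x) - 2) :=
  exp_cosh_ineq_general x ε hε0 hε1
end

section
/- Let V be a countable vertex set with positive vertex weights ν and symmetric nonnegative edge weights μ, and let 𝓛f(x) = (1/ν_x) Σ_y (f(y) − f(x)) μ_{xy} be the associated generator. Let I ⊆ [0,∞) be an interval, u : I × V → [0,∞) a positive subsolution of the heat equation (∂u/∂t ≤ 𝓛u on I × V) with finite support in space (uniformly in t), and h : I × V → (0,∞) a function such that for each t ∈ I and each y ∈ V, (1/ν_y) Σ_x [|h(t,x) − h(t,y)|² / (4 h(t,x) h(t,y))] μ_{xy} ≤ −(∂/∂t) log h(t,y). Then the function J(t) = Σ_x u(t,x)² h(t,x) ν_x is non-increasing on I. -/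
/-!
Differentiating `J(t) = ∑ₓ u² h ν` and inserting the two hypotheses bounds `J'` by a finite
double sum over the edges near the support of `u`. Symmetrising in `(x, y)`, each edge
contributes `μₓᵧ` times `2aP²(b - a) + 2bQ²(a - b) - (a²P² + b²Q²)(P² - Q²)²/(4P²Q²)`
with `a, b = u(t, ·) ≥ 0` and `P², Q² = h(t, ·) > 0`, which is `≤ 0` by an explicit
sum-of-squares identity. Hence `J' ≤ 0` on `I`.
-/

open Finset

lemma two_point_energy_nonpos {a b p q : ℝ} (ha : 0 ≤ a) (hb : 0 ≤ b) (hp : 0 < p) (hq : 0 < q) :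
    2 * a * p * (b - a) + 2 * b * q * (a - b)
      - a ^ 2 * p * ((q - p) ^ 2 / (4 * q * p)) - b ^ 2 * q * ((p - q) ^ 2 / (4 * p * q)) ≤ 0 := by
  obtain ⟨P, hP, rfl⟩ : ∃ P, 0 < P ∧ P ^ 2 = p := ⟨√p, Real.sqrt_pos.2 hp, Real.sq_sqrt hp.le⟩
  obtain ⟨Q, hQ, rfl⟩ : ∃ Q, 0 < Q ∧ Q ^ 2 = q := ⟨√q, Real.sqrt_pos.2 hq, Real.sq_sqrt hq.le⟩
  have hsos : 0 ≤ (a * P - b * Q) ^ 2 * (8 * P ^ 2 * Q ^ 2 + (P ^ 2 - Q ^ 2) ^ 2)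
      + 2 * (a * b * (P * Q)) * (P - Q) ^ 4 := by
    have : 0 ≤ a * b * (P * Q) := by positivity
    positivity
  calc 2 * a * P ^ 2 * (b - a) + 2 * b * Q ^ 2 * (a - b)
        - a ^ 2 * P ^ 2 * ((Q ^ 2 - P ^ 2) ^ 2 / (4 * Q ^ 2 * P ^ 2))
        - b ^ 2 * Q ^ 2 * ((P ^ 2 - Q ^ 2) ^ 2 / (4 * P ^ 2 * Q ^ 2))
      = -(((a * P - b * Q) ^ 2 * (8 * P ^ 2 * Q ^ 2 + (P ^ 2 - Q ^ 2) ^ 2)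
          + 2 * (a * b * (P * Q)) * (P - Q) ^ 4) / (4 * P ^ 2 * Q ^ 2)) := by
        field_simp
        ring
    _ ≤ 0 := neg_nonpos.mpr (div_nonneg hsos (by positivity))

lemma Finset.sum_sum_nonpos_of_add_swap_nonpos {ι : Type*} (K : Finset ι) (G : ι → ι → ℝ)
    (hG : ∀ x ∈ K, ∀ y ∈ K, G x y + G y x ≤ 0) : ∑ x ∈ K, ∑ y ∈ K, G x y ≤ 0 := by
  have hswap : ∑ x ∈ K, ∑ y ∈ K, G y x = ∑ x ∈ K, ∑ y ∈ K, G x y := sum_comm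
  have hsym : 2 * ∑ x ∈ K, ∑ y ∈ K, G x y = ∑ x ∈ K, ∑ y ∈ K, (G x y + G y x) := by
    simp only [sum_add_distrib, hswap]
    ring
  have : ∑ x ∈ K, ∑ y ∈ K, (G x y + G y x) ≤ 0 :=
    sum_nonpos fun x hx => sum_nonpos fun y hy => hG x hx y hy
  linarith

lemma HasDerivWithinAt.of_log {f : ℝ → ℝ} {s : Set ℝ} {t l : ℝ} (hf : ∀ r ∈ s, 0 < f r)
    (ht : t ∈ s) (hl : HasDerivWithinAt (fun r => Real.log (f r)) l s t) :
    HasDerivWithinAt f (f t * l) s t := by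
  have hexp := hl.exp
  rw [Real.exp_log (hf t ht)] at hexp
  exact hexp.congr (fun r hr => (Real.exp_log (hf r hr)).symm) (Real.exp_log (hf t ht)).symm

section WeightedGraph

variable {V : Type*} {μ : V → V → ℝ}

lemma exists_finset_superset_neighbors (hloc : ∀ x, {y | μ x y ≠ 0}.Finite) (S : Finset V) :
    ∃ K : Finset V, S ⊆ K ∧ ∀ x ∈ S, ∀ y ∉ K, μ x y = 0 := by
  classical
  refine ⟨S ∪ S.biUnion fun x => (hloc x).toFinset, subset_union_left, fun x hx y hy => ?_⟩
  by_contra hne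
  exact hy (mem_union_right _ (mem_biUnion.mpr ⟨x, hx, (hloc x).mem_toFinset.mpr hne⟩))

lemma sum_energy_form_nonpos (hμsymm : ∀ x y, μ x y = μ y x) (hμnn : ∀ x y, 0 ≤ μ x y)
    (K : Finset V) {a p : V → ℝ} (ha : ∀ x ∈ K, 0 ≤ a x) (hp : ∀ x ∈ K, 0 < p x) :
    ∑ x ∈ K, (2 * a x * p x * ∑ y ∈ K, (a y - a x) * μ x y
      - a x ^ 2 * p x * ∑ y ∈ K, |p y - p x| ^ 2 / (4 * p y * p x) * μ y x) ≤ 0 := by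
  set G : V → V → ℝ := fun x y => 2 * a x * p x * ((a y - a x) * μ x y)
    - a x ^ 2 * p x * (|p y - p x| ^ 2 / (4 * p y * p x) * μ y x)
  have hG : ∀ x ∈ K, ∀ y ∈ K, G x y + G y x ≤ 0 := by
    intro x hx y hy
    have hedge : G x y + G y x
        = (2 * a x * p x * (a y - a x) + 2 * a y * p y * (a x - a y)
          - a x ^ 2 * p x * ((p y - p x) ^ 2 / (4 * p y * p x))
          - a y ^ 2 * p y * ((p x - p y) ^ 2 / (4 * p x * p y))) * μ x y := by
      simp only [G, sq_abs, hμsymm y x]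
      ring
    rw [hedge]
    exact mul_nonpos_of_nonpos_of_nonneg
      (two_point_energy_nonpos (ha x hx) (ha y hy) (hp x hx) (hp y hy)) (hμnn x y)
  calc _ = ∑ x ∈ K, ∑ y ∈ K, G x y := by
        refine sum_congr rfl fun x _ => ?_
        rw [mul_sum, mul_sum, ← sum_sub_distrib]
    _ ≤ 0 := sum_sum_nonpos_of_add_swap_nonpos K G hG

variable {ν : V → ℝ}

lemma sum_energy_rate_nonpos (hμsymm : ∀ x y, μ x y = μ y x) (hμnn : ∀ x y, 0 ≤ μ x y)
    (hloc : ∀ x, {y | μ x y ≠ 0}.Finite) (hν : ∀ x, 0 < ν x) (S : Finset V) {u u' h l : V → ℝ}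
    (hunn : ∀ x, 0 ≤ u x) (hsupp : ∀ x ∉ S, u x = 0) (hpos : ∀ x, 0 < h x)
    (hsub : ∀ x, u' x ≤ (∑' y, (u y - u x) * μ x y) / ν x)
    (hF : ∀ y, (∑' x, |h x - h y| ^ 2 / (4 * h x * h y) * μ x y) / ν y ≤ -l y) :
    ∑ x ∈ S, (2 * u x * u' x * h x + u x ^ 2 * (h x * l x)) * ν x ≤ 0 := by
  obtain ⟨K, hSK, hK⟩ := exists_finset_superset_neighbors hloc S
  set E : V → ℝ := fun x => 2 * u x * h x * ∑ y ∈ K, (u y - u x) * μ x y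
    - u x ^ 2 * h x * ∑ y ∈ K, |h y - h x| ^ 2 / (4 * h y * h x) * μ y x
  have hterm : ∀ x ∈ S, (2 * u x * u' x * h x + u x ^ 2 * (h x * l x)) * ν x ≤ E x := by
    intro x hx
    have hT : ∑' y, (u y - u x) * μ x y = ∑ y ∈ K, (u y - u x) * μ x y :=
      tsum_eq_sum fun y hy => by rw [hK x hx y hy, mul_zero]
    have hW : ∑' y, |h y - h x| ^ 2 / (4 * h y * h x) * μ y x
        = ∑ y ∈ K, |h y - h x| ^ 2 / (4 * h y * h x) * μ y x :=
      tsum_eq_sum fun y hy => by rw [hμsymm y x, hK x hx y hy, mul_zero]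
    have hu' : u' x * ν x ≤ ∑' y, (u y - u x) * μ x y := (le_div_iff₀ (hν x)).1 (hsub x)
    have hl : l x * ν x ≤ -∑' y, |h y - h x| ^ 2 / (4 * h y * h x) * μ y x := by
      have := (div_le_iff₀ (hν x)).1 (hF x)
      linarith
    have hux := hunn x
    have hhx := hpos x
    calc (2 * u x * u' x * h x + u x ^ 2 * (h x * l x)) * ν x
        = 2 * u x * h x * (u' x * ν x) + u x ^ 2 * h x * (l x * ν x) := by ring
      _ ≤ 2 * u x * h x * ∑' y, (u y - u x) * μ x y
          + u x ^ 2 * h x * -∑' y, |h y - h x| ^ 2 / (4 * h y * h x) * μ y x := by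
        gcongr
      _ = E x := by rw [hT, hW]; ring
  calc _ ≤ ∑ x ∈ S, E x := sum_le_sum hterm
    _ = ∑ x ∈ K, E x := sum_subset hSK fun x _ hx => by simp [E, hsupp x hx]
    _ ≤ 0 := sum_energy_form_nonpos hμsymm hμnn K (fun x _ => hunn x) fun x _ => hpos x

end WeightedGraph

theorem integral_maximum_principle_general
    (V : Type*) (μ : V → V → ℝ) (ν : V → ℝ)
    (hμsymm : ∀ x y, μ x y = μ y x) (hμnn : ∀ x y, 0 ≤ μ x y)
    (hν : ∀ x, 0 < ν x) (hloc : ∀ x, {y | μ x y ≠ 0}.Finite)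
    (I : Set ℝ) (hI : I.OrdConnected)
    (u u' : ℝ → V → ℝ)
    (hunn : ∀ t ∈ I, ∀ x, 0 ≤ u t x)
    (S : Finset V) (hsupp : ∀ t ∈ I, ∀ x, x ∉ S → u t x = 0)
    (hderiv : ∀ t ∈ I, ∀ x, HasDerivWithinAt (fun s => u s x) (u' t x) I t)
    (hsub : ∀ t ∈ I, ∀ x, u' t x ≤ (∑' y, (u t y - u t x) * μ x y) / ν x)
    (h lh' : ℝ → V → ℝ)
    (hpos : ∀ t ∈ I, ∀ x, 0 < h t x)
    (hlder : ∀ t ∈ I, ∀ y, HasDerivWithinAt (fun s => Real.log (h s y)) (lh' t y) I t)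
    (hF : ∀ t ∈ I, ∀ y,
      (∑' x, |h t x - h t y| ^ 2 / (4 * h t x * h t y) * μ x y) / ν y ≤ - lh' t y) :
    AntitoneOn (fun t => ∑' x, u t x ^ 2 * h t x * ν x) I := by
  set F : ℝ → ℝ := fun t => ∑ x ∈ S, u t x ^ 2 * h t x * ν x
  have hJF : Set.EqOn F (fun t => ∑' x, u t x ^ 2 * h t x * ν x) I := fun t ht =>
    (tsum_eq_sum fun x hx => by rw [hsupp t ht x hx]; ring).symm
  have hFderiv : ∀ t ∈ I, HasDerivWithinAt F
      (∑ x ∈ S, (2 * u t x * u' t x * h t x + u t x ^ 2 * (h t x * lh' t x)) * ν x) I t := by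
    intro t ht
    refine HasDerivWithinAt.fun_sum fun x _ => ?_
    have hu2 : HasDerivWithinAt (fun s => u s x ^ 2) (2 * u t x * u' t x) I t := by
      simpa using (hderiv t ht x).fun_pow 2
    have hh := HasDerivWithinAt.of_log (fun r hr => hpos r hr x) ht (hlder t ht x)
    exact (hu2.fun_mul hh).mul_const (ν x)
  refine AntitoneOn.congr ?_ hJF
  refine antitoneOn_of_hasDerivWithinAt_nonpos (convex_iff_ordConnected.mpr hI)
    (fun t ht => (hFderiv t ht).continuousWithinAt)
    (fun t ht => (hFderiv t (interior_subset ht)).mono interior_subset) fun t ht => ?_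
  have ht := interior_subset ht
  exact sum_energy_rate_nonpos hμsymm hμnn hloc hν S (hunn t ht) (fun x hx => hsupp t ht x hx)
    (hpos t ht) (hsub t ht) (hF t ht)

/-- Integral Maximum Principle for positive subsolutions of the heat equation on a
weighted graph. -/
theorem integral_maximum_principle
    (V : Type*) (μ : V → V → ℝ) (ν : V → ℝ)
    (hμsymm : ∀ x y, μ x y = μ y x) (hμnn : ∀ x y, 0 ≤ μ x y)
    (hν : ∀ x, 0 < ν x) (hloc : ∀ x, {y | μ x y ≠ 0}.Finite)
    (I : Set ℝ) (hI : I.OrdConnected) (hInn : I ⊆ Set.Ici (0 : ℝ))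
    (u u' : ℝ → V → ℝ)
    (hunn : ∀ t ∈ I, ∀ x, 0 ≤ u t x)
    (S : Finset V) (hsupp : ∀ t ∈ I, ∀ x, x ∉ S → u t x = 0)
    (hderiv : ∀ t ∈ I, ∀ x, HasDerivWithinAt (fun s => u s x) (u' t x) I t)
    (hsub : ∀ t ∈ I, ∀ x, u' t x ≤ (∑' y, (u t y - u t x) * μ x y) / ν x)
    (h lh' : ℝ → V → ℝ)
    (hpos : ∀ t ∈ I, ∀ x, 0 < h t x)
    (hlder : ∀ t ∈ I, ∀ y, HasDerivWithinAt (fun s => Real.log (h s y)) (lh' t y) I t)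
    (hF : ∀ t ∈ I, ∀ y,
      (∑' x, |h t x - h t y| ^ 2 / (4 * h t x * h t y) * μ x y) / ν y ≤ - lh' t y) :
    AntitoneOn (fun t => ∑' x, u t x ^ 2 * h t x * ν x) I :=
  integral_maximum_principle_general V μ ν hμsymm hμnn hν hloc I hI u u' hunn S hsupp hderiv hsub h
    lh' hpos hlder hF
end

section
/- Fix a ∈ [0, 1/4] and a function ρ : V → [0,∞) satisfying |ρ(x) − ρ(y)| ≤ d_ν(x,y) whenever x ∼ y, where d_ν is an adapted metric. Then h₁(t,x) = exp(a ρ(x) − (a²/2) t) satisfies, for all t ≥ 0 and all adjacent x ∼ y, |h₁(t,x) − h₁(t,y)|² / (4 h₁(t,x) h₁(t,y)) ≤ −d_ν(x,y)² · (∂/∂t) log h₁(t,y). -/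
/-! With `u = a (ρ x - ρ y)` the left-hand side equals `(cosh u - 1) / 2` and the right-hand side
is `a² dν(x,y)² / 2`. Since `|u| ≤ a dν(x,y) ≤ 1/4`, the second-order Taylor bound
`cosh u - 1 ≤ u²` (valid for `|u| ≤ 1`) closes the gap. -/

open Real

lemma cosh_sub_one_le_sq {u : ℝ} (hu : |u| ≤ 1) : cosh u - 1 ≤ u ^ 2 := by
  have hpos := abs_exp_sub_one_sub_id_le hu
  have hneg := abs_exp_sub_one_sub_id_le (x := -u) (by rwa [abs_neg])
  rw [cosh_eq]
  linarith [(abs_le.mp hpos).2, (abs_le.mp hneg).2, neg_sq u]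

lemma sq_abs_exp_sub_exp_div (A B : ℝ) :
    |exp A - exp B| ^ 2 / (4 * exp A * exp B) = (cosh (A - B) - 1) / 2 := by
  have hA : exp A = exp B * exp (A - B) := by rw [← exp_add, add_sub_cancel]
  rw [sq_abs, cosh_eq, exp_neg, hA]
  field_simp
  ring

lemma deriv_log_exp_affine (c k t : ℝ) :
    deriv (fun s => log (exp (c - k * s))) t = -k := by
  simp only [log_exp]
  exact (((hasDerivAt_id t).const_mul k).const_sub c).deriv.trans (by simp)

theorem h1_in_F_general (V : Type*) (adj : V → V → Prop) (dν : V → V → ℝ) (ρ : V → ℝ) (a : ℝ)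
    (ha0 : 0 ≤ a) (ha : a ≤ 1 / 4)
    (hlip : ∀ x y, adj x y → |ρ x - ρ y| ≤ dν x y)
    (hd1 : ∀ x y, adj x y → dν x y ≤ 1) :
    ∀ t : ℝ, 0 ≤ t → ∀ x y, adj x y →
      |Real.exp (a * ρ x - a ^ 2 / 2 * t) - Real.exp (a * ρ y - a ^ 2 / 2 * t)| ^ 2 /
          (4 * Real.exp (a * ρ x - a ^ 2 / 2 * t) * Real.exp (a * ρ y - a ^ 2 / 2 * t)) ≤
        - dν x y ^ 2 *
          deriv (fun s => Real.log (Real.exp (a * ρ y - a ^ 2 / 2 * s))) t := by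
  intro t _ x y hxy
  rw [sq_abs_exp_sub_exp_div, deriv_log_exp_affine]
  set u := a * ρ x - a ^ 2 / 2 * t - (a * ρ y - a ^ 2 / 2 * t)
  have hu : |u| ≤ a * dν x y := by
    rw [show u = a * (ρ x - ρ y) by ring, abs_mul, abs_of_nonneg ha0]
    exact mul_le_mul_of_nonneg_left (hlip x y hxy) ha0
  have hd0 : 0 ≤ dν x y := (abs_nonneg _).trans (hlip x y hxy)
  have had : a * dν x y ≤ 1 := by nlinarith [hd1 x y hxy]
  have hu2 : u ^ 2 ≤ (a * dν x y) ^ 2 := sq_le_sq' (abs_le.mp hu).1 (abs_le.mp hu).2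
  nlinarith [cosh_sub_one_le_sq (hu.trans had)]

/-- The function h₁(t,x) = exp(a ρ(x) − (a²/2) t) satisfies the key inequality
of the Integral Maximum Principle. -/
theorem h1_in_F (V : Type*) (adj : V → V → Prop) (dν : V → V → ℝ) (ρ : V → ℝ) (a : ℝ)
    (ha0 : 0 ≤ a) (ha : a ≤ 1 / 4)
    (hρnn : ∀ x, 0 ≤ ρ x) (hdnn : ∀ x y, 0 ≤ dν x y)
    (hlip : ∀ x y, adj x y → |ρ x - ρ y| ≤ dν x y)
    (hd1 : ∀ x y, adj x y → dν x y ≤ 1) :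
    ∀ t : ℝ, 0 ≤ t → ∀ x y, adj x y →
      |Real.exp (a * ρ x - a ^ 2 / 2 * t) - Real.exp (a * ρ y - a ^ 2 / 2 * t)| ^ 2 /
          (4 * Real.exp (a * ρ x - a ^ 2 / 2 * t) * Real.exp (a * ρ y - a ^ 2 / 2 * t)) ≤
        - dν x y ^ 2 *
          deriv (fun s => Real.log (Real.exp (a * ρ y - a ^ 2 / 2 * s))) t :=
  h1_in_F_general V adj dν ρ a ha0 ha hlip hd1
end

section
/- Fix D ≥ 5, R ≥ 1, Δ ≥ 24R/D, s > 0, and ε ∈ [0,1]. For any r₁, r₂ ∈ [1,R] with |r₁ − r₂| ≤ ε, and any t ∈ [0,s], setting h(t,r) = exp(−r²/(D(s − t + Δ))), one has |h(t,r₁) − h(t,r₂)|² / (4 h(t,r₁) h(t,r₂)) ≤ −ε² · (∂/∂t) log h(t,r₂), i.e. (e^{b} + e^{-b} − 2)/4 ≤ ε² r₂² / (D(s − t + Δ)²), where b = |r₁² − r₂²|/(D(s − t + Δ)). -/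
/-!
With `b = |r₁² - r₂²| / (D u)` and `u = s - t + Δ`, the quadratic bound
`e^b + e^{-b} - 2 ≤ 2 b²` holds as soon as `|b| ≤ 1`. Factoring `r₁² - r₂² = (r₁ - r₂)(r₁ + r₂)`
gives `b ≤ 3 ε r₂ / (D u)`, which is at most `1/8` because `D u ≥ 24 R`; the remaining
inequality `b² / 2 ≤ ε² r₂² / (D u²)` then only needs `D ≥ 9/2`.
-/

open Real

theorem exp_add_exp_neg_sub_two_le {x : ℝ} (hx : |x| ≤ 1) :
    exp x + exp (-x) - 2 ≤ 2 * x ^ 2 := by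
  have hpos := abs_le.1 (abs_exp_sub_one_sub_id_le hx)
  have hneg := abs_le.1 (abs_exp_sub_one_sub_id_le (x := -x) (by rwa [abs_neg]))
  rw [neg_sq] at hneg
  linarith [hpos.2, hneg.2]

theorem abs_sq_sub_sq_le_of_abs_sub_le {a b ε : ℝ} (ha : 0 ≤ a) (hb : 0 ≤ b)
    (h : |a - b| ≤ ε) : |a ^ 2 - b ^ 2| ≤ ε * (2 * b + ε) := by
  have hab : a + b ≤ 2 * b + ε := by linarith [(abs_le.1 h).2]
  rw [sq_sub_sq, abs_mul, abs_of_nonneg (add_nonneg ha hb), mul_comm]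
  exact mul_le_mul h hab (by positivity) ((abs_nonneg _).trans h)

theorem gaussian_weight_ineq_general (D R Δ s ε r₁ r₂ t : ℝ)
    (hD : 5 ≤ D) (hΔ : 24 * R / D ≤ Δ)
    (hε0 : 0 ≤ ε) (hε1 : ε ≤ 1)
    (hr₁ : 1 ≤ r₁) (hr₂ : 1 ≤ r₂) (hr₂R : r₂ ≤ R)
    (hdiff : |r₁ - r₂| ≤ ε) (hts : t ≤ s) :
    (Real.exp (|r₁ ^ 2 - r₂ ^ 2| / (D * (s - t + Δ))) +
        Real.exp (-(|r₁ ^ 2 - r₂ ^ 2| / (D * (s - t + Δ)))) - 2) / 4 ≤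
      ε ^ 2 * r₂ ^ 2 / (D * (s - t + Δ) ^ 2) := by
  set u := s - t + Δ
  have hD0 : 0 < D := by linarith
  have hDu : 24 * R ≤ D * u := by
    have := (div_le_iff₀ hD0).1 hΔ
    nlinarith
  have hK : 0 < D * u := by linarith
  set x := |r₁ ^ 2 - r₂ ^ 2| / (D * u)
  have hx0 : 0 ≤ x := by positivity
  have hx : x ≤ 3 * ε * r₂ / (D * u) := by
    refine div_le_div_of_nonneg_right ?_ hK.le
    calc |r₁ ^ 2 - r₂ ^ 2| ≤ ε * (2 * r₂ + ε) :=
          abs_sq_sub_sq_le_of_abs_sub_le (by linarith) (by linarith) hdiff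
      _ ≤ 3 * ε * r₂ := by nlinarith
  have hx1 : |x| ≤ 1 := by
    rw [abs_of_nonneg hx0]
    refine hx.trans ((div_le_one hK).2 ?_)
    nlinarith
  calc (exp x + exp (-x) - 2) / 4 ≤ 2 * x ^ 2 / 4 := by
        gcongr; exact exp_add_exp_neg_sub_two_le hx1
    _ ≤ 2 * (3 * ε * r₂ / (D * u)) ^ 2 / 4 := by gcongr
    _ = 9 / (2 * D) * (ε ^ 2 * r₂ ^ 2 / (D * u ^ 2)) := by field_simp; ring
    _ ≤ ε ^ 2 * r₂ ^ 2 / (D * u ^ 2) := by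
        refine mul_le_of_le_one_left (by positivity) ?_
        rw [div_le_one (by positivity)]
        linarith

theorem gaussian_weight_ineq (D R Δ s ε r₁ r₂ t : ℝ)
    (hD : 5 ≤ D) (hR : 1 ≤ R) (hΔ : 24 * R / D ≤ Δ) (hs : 0 < s)
    (hε0 : 0 ≤ ε) (hε1 : ε ≤ 1)
    (hr₁ : 1 ≤ r₁) (hr₁R : r₁ ≤ R) (hr₂ : 1 ≤ r₂) (hr₂R : r₂ ≤ R)
    (hdiff : |r₁ - r₂| ≤ ε) (ht0 : 0 ≤ t) (hts : t ≤ s) :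
    (Real.exp (|r₁ ^ 2 - r₂ ^ 2| / (D * (s - t + Δ))) +
        Real.exp (-(|r₁ ^ 2 - r₂ ^ 2| / (D * (s - t + Δ)))) - 2) / 4 ≤
      ε ^ 2 * r₂ ^ 2 / (D * (s - t + Δ) ^ 2) :=
  gaussian_weight_ineq_general D R Δ s ε r₁ r₂ t hD hΔ hε0 hε1 hr₁ hr₂ hr₂R hdiff hts
end

section
/- Let u : [0,∞) × V → [0,∞) be a positive subsolution of the heat equation on a weighted graph with finite spatial support, with initial condition u(0,z) = ν_o^{-1/2} 1_{z=o}. Then for all t ≥ R > 0: Σ_{z : d_ν(o,z) ≥ R} u(t,z)² ν_z ≤ exp(−R²/(8t)). -/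
/-!
Davies' method. For `κ ≥ 0` put `w = exp (κ d(o, ·))` and `E(s) = ∑ u(s)² w² ν`. As `u ≥ 0` is a
subsolution, `E' ≤ 2 ∑ₓ u(x) w(x)² ∑_y (u(y) - u(x)) μ_xy`, and symmetrizing in `(x, y)` bounds
this by `∑ₓ u(x)² ∑_y (w(x) - w(y))² μ_xy`. On edges `|w(x) - w(y)| ≤ κ e^κ d(x,y) w(x)`, so the
adaptedness of `d` gives `E' ≤ κ² e^{2κ} E`. Grönwall and `E(0) = 1` give
`E(t) ≤ exp (κ² e^{2κ} t)`, while the tail sum is at most `e^{-2κR} E(t)`. The choice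
`κ = R/(2t) ≤ 1/2` gives `e^{2κ} ≤ e < 7/2`, hence the exponent `-R²/(8t)`.
-/

open Classical

open Real Finset Set

lemma Real.abs_exp_sub_one_le_abs_mul_exp_abs (s : ℝ) : |exp s - 1| ≤ |s| * exp |s| := by
  rcases le_total 0 s with hs | hs
  · have h : 1 - s ≤ exp (-s) := one_sub_le_exp_neg s
    rw [abs_of_nonneg hs, abs_of_nonneg (by linarith [one_le_exp hs])]
    nlinarith [exp_pos s, exp_neg s, mul_inv_cancel₀ (exp_pos s).ne']
  · rw [abs_of_nonpos hs, abs_of_nonpos (by linarith [exp_le_one_iff.2 hs])]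
    nlinarith [add_one_le_exp s, one_le_exp (neg_nonneg.2 hs)]

lemma sq_exp_mul_sub_exp_mul_le {κ a b d : ℝ} (hκ : 0 ≤ κ) (hab : |a - b| ≤ d) (hd : d ≤ 1) :
    (exp (κ * a) - exp (κ * b)) ^ 2 ≤ κ ^ 2 * exp (2 * κ) * d ^ 2 * exp (κ * a) ^ 2 := by
  have hκd : |κ * (b - a)| ≤ κ * d := by
    rw [abs_mul, abs_of_nonneg hκ, abs_sub_comm]; exact mul_le_mul_of_nonneg_left hab hκ
  have hexp : |exp (κ * (b - a)) - 1| ≤ κ * d * exp κ :=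
    (abs_exp_sub_one_le_abs_mul_exp_abs _).trans <| mul_le_mul hκd
      (exp_le_exp.2 (hκd.trans (mul_le_of_le_one_right hκ hd))) (exp_pos _).le
      (mul_nonneg hκ ((abs_nonneg _).trans hab))
  have hfactor : exp (κ * a) - exp (κ * b) = -(exp (κ * a) * (exp (κ * (b - a)) - 1)) := by
    rw [mul_sub, mul_one, ← exp_add]; ring_nf
  calc (exp (κ * a) - exp (κ * b)) ^ 2 = exp (κ * a) ^ 2 * |exp (κ * (b - a)) - 1| ^ 2 := by
        rw [hfactor, neg_sq, mul_pow, sq_abs]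
    _ ≤ exp (κ * a) ^ 2 * (κ * d * exp κ) ^ 2 := by gcongr
    _ = κ ^ 2 * exp (2 * κ) * d ^ 2 * exp (κ * a) ^ 2 := by
        rw [two_mul, exp_add]; ring

lemma sq_mul_exp_mul_sub_le {R t : ℝ} (hR : 0 < R) (ht : R ≤ t) :
    (R / (2 * t)) ^ 2 * exp (2 * (R / (2 * t))) * t - 2 * (R / (2 * t)) * R
      ≤ -(R ^ 2) / (8 * t) := by
  have ht0 : 0 < t := hR.trans_le ht
  have htwo : 2 * (R / (2 * t)) = R / t := by field_simp
  have hexp : exp (2 * (R / (2 * t))) ≤ 7 / 2 :=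
    calc exp (2 * (R / (2 * t))) ≤ exp 1 := by rw [htwo, exp_le_exp, div_le_one ht0]; exact ht
      _ ≤ 7 / 2 := by linarith [exp_one_lt_d9]
  have hsq : (R / (2 * t)) ^ 2 * t = R ^ 2 / t / 4 := by field_simp; ring
  have hpos : 0 ≤ R ^ 2 / t := by positivity
  calc (R / (2 * t)) ^ 2 * exp (2 * (R / (2 * t))) * t - 2 * (R / (2 * t)) * R
      = R ^ 2 / t / 4 * exp (2 * (R / (2 * t))) - R ^ 2 / t := by rw [← hsq, htwo]; ring
    _ ≤ R ^ 2 / t / 4 * (7 / 2) - R ^ 2 / t := by gcongr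
    _ = -(R ^ 2) / (8 * t) := by field_simp; ring

lemma sum_sum_le_sum_sum_of_add_swap_le {ι : Type*} (T : Finset ι) (f g : ι → ι → ℝ)
    (h : ∀ x ∈ T, ∀ y ∈ T, f x y + f y x ≤ g x y + g y x) :
    ∑ x ∈ T, ∑ y ∈ T, f x y ≤ ∑ x ∈ T, ∑ y ∈ T, g x y := by
  have hswap (F : ι → ι → ℝ) :
      2 * ∑ x ∈ T, ∑ y ∈ T, F x y = ∑ x ∈ T, ∑ y ∈ T, (F x y + F y x) := by
    simp only [sum_add_distrib]; rw [sum_comm (f := fun x y => F y x)]; ring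
  have := sum_le_sum fun x hx => sum_le_sum fun y hy => h x hx y hy
  linarith [hswap f, hswap g]

lemma sum_sum_mul_sub_le_sum_sq_mul_sum {ι : Type*} (T : Finset ι) (m : ι → ι → ℝ)
    (hm_symm : ∀ x y, m x y = m y x) (hm_nn : ∀ x y, 0 ≤ m x y) (a w : ι → ℝ) :
    ∑ x ∈ T, ∑ y ∈ T, 2 * a x * w x ^ 2 * (a y - a x) * m x y
      ≤ ∑ x ∈ T, a x ^ 2 * ∑ y ∈ T, (w x - w y) ^ 2 * m x y := by
  simp_rw [mul_sum]
  refine sum_sum_le_sum_sum_of_add_swap_le T _ _ fun x _ y _ => ?_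
  rw [hm_symm y x]
  -- `(a x - a y) (a x w x² - a y w y²) = (a x w x - a y w y)² - a x a y (w x - w y)²`
  nlinarith [mul_nonneg (hm_nn x y) (sq_nonneg (a y * w y - a x * w x)),
    mul_nonneg (hm_nn x y) (mul_nonneg (sq_nonneg (a x - a y)) (sq_nonneg (w x - w y)))]

lemma le_mul_exp_of_hasDerivWithinAt_le {E D : ℝ → ℝ} {C t : ℝ} (ht : 0 ≤ t)
    (hE : ∀ s, 0 ≤ s → HasDerivWithinAt E (D s) (Ici 0) s) (hD : ∀ s, 0 ≤ s → D s ≤ C * E s) :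
    E t ≤ E 0 * exp (C * t) := by
  have hcont : ContinuousOn E (Icc 0 t) := fun s hs =>
    (hE s hs.1).continuousWithinAt.mono Icc_subset_Ici_self
  have hright (s) (hs : s ∈ Ico 0 t) : HasDerivWithinAt E (D s) (Ici s) s :=
    (hE s hs.1).mono (Ici_subset_Ici.2 hs.1)
  have := le_gronwallBound_of_liminf_deriv_right_le (K := C) (ε := 0) hcont
    (fun s hs _ hr => (hright s hs).liminf_right_slope_le hr) le_rfl
    (fun s hs => (hD s hs.1).trans_eq (add_zero _).symm) t ⟨ht, le_rfl⟩
  rwa [sub_zero, gronwallBound_ε0] at this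

def weightedEnergy {ι : Type*} (T : Finset ι) (ν w f : ι → ℝ) : ℝ :=
  ∑ x ∈ T, f x ^ 2 * (w x ^ 2 * ν x)

section weightedEnergy

variable {ι : Type*} (T : Finset ι) (ν w : ι → ℝ)

lemma hasDerivWithinAt_weightedEnergy {u u' : ℝ → ι → ℝ} {s : Set ℝ} {t : ℝ}
    (hu : ∀ x ∈ T, HasDerivWithinAt (fun r => u r x) (u' t x) s t) :
    HasDerivWithinAt (fun r => weightedEnergy T ν w (u r))
      (∑ x ∈ T, 2 * u t x * u' t x * (w x ^ 2 * ν x)) s t := by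
  have h : HasDerivWithinAt (fun r => ∑ x ∈ T, u r x ^ 2 * (w x ^ 2 * ν x))
      (∑ x ∈ T, ((2 : ℕ) * u t x ^ (2 - 1) * u' t x) * (w x ^ 2 * ν x)) s t :=
    HasDerivWithinAt.fun_sum fun x hx => ((hu x hx).fun_pow 2).mul_const _
  unfold weightedEnergy
  convert h using 1
  refine sum_congr rfl fun x _ => ?_
  push_cast
  ring

lemma sum_two_mul_mul_deriv_le_mul_weightedEnergy (m : ι → ι → ℝ)
    (hm_symm : ∀ x y, m x y = m y x) (hm_nn : ∀ x y, 0 ≤ m x y) (hν : ∀ x ∈ T, 0 < ν x)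
    {u u' : ι → ℝ} {C : ℝ} (hu : ∀ x ∈ T, 0 ≤ u x)
    (hsub : ∀ x ∈ T, u' x ≤ (∑ y ∈ T, (u y - u x) * m x y) / ν x)
    (hw : ∀ x ∈ T, ∑ y ∈ T, (w x - w y) ^ 2 * m x y ≤ C * (w x ^ 2 * ν x)) :
    ∑ x ∈ T, 2 * u x * u' x * (w x ^ 2 * ν x) ≤ C * weightedEnergy T ν w u := by
  calc ∑ x ∈ T, 2 * u x * u' x * (w x ^ 2 * ν x)
      ≤ ∑ x ∈ T, ∑ y ∈ T, 2 * u x * w x ^ 2 * (u y - u x) * m x y := by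
        refine sum_le_sum fun x hx => ?_
        have h := (le_div_iff₀ (hν x hx)).1 (hsub x hx)
        calc 2 * u x * u' x * (w x ^ 2 * ν x) = 2 * u x * w x ^ 2 * (u' x * ν x) := by ring
          _ ≤ 2 * u x * w x ^ 2 * ∑ y ∈ T, (u y - u x) * m x y := by
              have := hu x hx
              gcongr
          _ = _ := by rw [mul_sum]; simp_rw [mul_assoc]
    _ ≤ ∑ x ∈ T, u x ^ 2 * ∑ y ∈ T, (w x - w y) ^ 2 * m x y :=
        sum_sum_mul_sub_le_sum_sq_mul_sum T m hm_symm hm_nn u w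
    _ ≤ ∑ x ∈ T, u x ^ 2 * (C * (w x ^ 2 * ν x)) := by
        gcongr with x hx; exact hw x hx
    _ = C * weightedEnergy T ν w u := by
        rw [weightedEnergy, mul_sum]; simp_rw [mul_left_comm C]

lemma weightedEnergy_le_mul_exp (m : ι → ι → ℝ)
    (hm_symm : ∀ x y, m x y = m y x) (hm_nn : ∀ x y, 0 ≤ m x y) (hν : ∀ x ∈ T, 0 < ν x)
    {u u' : ℝ → ι → ℝ} {C t : ℝ} (hu : ∀ s x, 0 ≤ s → 0 ≤ u s x)
    (hderiv : ∀ s x, 0 ≤ s → HasDerivWithinAt (fun r => u r x) (u' s x) (Ici 0) s)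
    (hsub : ∀ s, 0 ≤ s → ∀ x ∈ T, u' s x ≤ (∑ y ∈ T, (u s y - u s x) * m x y) / ν x)
    (hw : ∀ x ∈ T, ∑ y ∈ T, (w x - w y) ^ 2 * m x y ≤ C * (w x ^ 2 * ν x)) (ht : 0 ≤ t) :
    weightedEnergy T ν w (u t) ≤ weightedEnergy T ν w (u 0) * exp (C * t) :=
  le_mul_exp_of_hasDerivWithinAt_le ht
    (fun s hs => hasDerivWithinAt_weightedEnergy T ν w fun x _ => hderiv s x hs)
    (fun s hs => sum_two_mul_mul_deriv_le_mul_weightedEnergy T ν w m hm_symm hm_nn hν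
      (fun x _ => hu s x hs) (hsub s hs) hw)

end weightedEnergy

lemma weightedEnergy_ite_eq {ι : Type*} [DecidableEq ι] {T : Finset ι} (ν w : ι → ℝ) {o : ι}
    (ho : o ∈ T) (hν : 0 < ν o) :
    weightedEnergy T ν w (fun z => if z = o then (√(ν o))⁻¹ else 0) = w o ^ 2 := by
  rw [weightedEnergy, sum_eq_single_of_mem o ho fun z _ hz => by simp [hz], if_pos rfl,
    inv_pow, sq_sqrt hν.le]
  field_simp

lemma tsum_ite_le_exp_mul_weightedEnergy {V : Type*} (T : Finset V) {ν f g : V → ℝ}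
    (hν : ∀ x, 0 ≤ ν x) (hg : ∀ x ∉ T, g x = 0) {κ : ℝ} (hκ : 0 ≤ κ) (R : ℝ) :
    ∑' z, (if R ≤ f z then g z ^ 2 * ν z else 0)
      ≤ exp (-(2 * κ * R)) * weightedEnergy T ν (fun z => exp (κ * f z)) g := by
  rw [tsum_eq_sum fun z hz => by simp [hg z hz], weightedEnergy, mul_sum]
  refine sum_le_sum fun z _ => ?_
  have hg2ν : 0 ≤ g z ^ 2 * ν z := mul_nonneg (sq_nonneg _) (hν z)
  split_ifs with hRf
  · have hweight : 1 ≤ exp (-(2 * κ * R)) * exp (κ * f z) ^ 2 := by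
      rw [← exp_nat_mul, ← exp_add]
      exact one_le_exp (by push_cast; nlinarith)
    calc g z ^ 2 * ν z ≤ g z ^ 2 * ν z * (exp (-(2 * κ * R)) * exp (κ * f z) ^ 2) :=
          le_mul_of_one_le_right hg2ν hweight
      _ = _ := by ring
  · exact mul_nonneg (exp_pos _).le (mul_nonneg (sq_nonneg _) (mul_nonneg (sq_nonneg _) (hν z)))

lemma tsum_sub_mul_eq_sum {V : Type*} {μ : V → V → ℝ} {S T : Finset V} {f : V → ℝ}
    (hf : ∀ x ∉ S, f x = 0) (hST : S ⊆ T) (hnbr : ∀ x ∈ S, ∀ y, μ x y ≠ 0 → y ∈ T)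
    (x : V) :
    ∑' y, (f y - f x) * μ x y = ∑ y ∈ T, (f y - f x) * μ x y := by
  refine tsum_eq_sum fun y hy => ?_
  by_cases hxS : x ∈ S
  · rw [not_imp_comm.1 (hnbr x hxS y) hy, mul_zero]
  · rw [hf x hxS, hf y fun hyS => hy (hST hyS), sub_zero, zero_mul]

lemma sum_le_of_tsum_div_le_one {V : Type*} {g : V → ℝ} (hg : g.support.Finite) (hg0 : 0 ≤ g)
    {c : ℝ} (hc : 0 < c) (h : (∑' y, g y) / c ≤ 1) (T : Finset V) : ∑ y ∈ T, g y ≤ c :=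
  ((summable_of_hasFiniteSupport hg).sum_le_tsum T fun y _ => hg0 y).trans
    ((div_le_one hc).1 h)

lemma sum_sq_exp_sub_mul_le {V : Type*} (T : Finset V) {μ d : V → V → ℝ} {f : V → ℝ} {κ : ℝ}
    (hκ : 0 ≤ κ) (hμ : ∀ x y, 0 ≤ μ x y) (hf : ∀ x y, |f x - f y| ≤ d x y)
    (hd : ∀ x y, 0 < μ x y → d x y ≤ 1) (x : V) :
    ∑ y ∈ T, (exp (κ * f x) - exp (κ * f y)) ^ 2 * μ x y
      ≤ κ ^ 2 * exp (2 * κ) * exp (κ * f x) ^ 2 * ∑ y ∈ T, d x y ^ 2 * μ x y := by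
  rw [mul_sum]
  refine sum_le_sum fun y _ => ?_
  rcases (hμ x y).eq_or_lt with hμ0 | hμpos
  · simp [← hμ0]
  · calc (exp (κ * f x) - exp (κ * f y)) ^ 2 * μ x y
        ≤ κ ^ 2 * exp (2 * κ) * d x y ^ 2 * exp (κ * f x) ^ 2 * μ x y := by
          gcongr; exact sq_exp_mul_sub_exp_mul_le hκ (hf x y) (hd x y hμpos)
      _ = _ := by ring

lemma sum_sq_exp_mul_dist_sub_mul_le {V : Type*} (T : Finset V) {μ d : V → V → ℝ} {ν : V → ℝ}
    (hμ : ∀ x y, 0 ≤ μ x y) (hν : ∀ x, 0 < ν x) (hloc : ∀ x, {y | μ x y ≠ 0}.Finite)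
    (hd_symm : ∀ x y, d x y = d y x) (hd_tri : ∀ x y z, d x z ≤ d x y + d y z)
    (hadapt1 : ∀ x, (∑' y, d x y ^ 2 * μ x y) / ν x ≤ 1)
    (hadapt2 : ∀ x y, 0 < μ x y → d x y ≤ 1) {κ : ℝ} (hκ : 0 ≤ κ) (o x : V) :
    ∑ y ∈ T, (exp (κ * d o x) - exp (κ * d o y)) ^ 2 * μ x y
      ≤ κ ^ 2 * exp (2 * κ) * (exp (κ * d o x) ^ 2 * ν x) := by
  have hlip (x y : V) : |d o x - d o y| ≤ d x y := abs_sub_le_iff.2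
    ⟨by linarith [hd_tri o y x, hd_symm x y], by linarith [hd_tri o x y]⟩
  refine (sum_sq_exp_sub_mul_le T hκ hμ hlip hadapt2 x).trans ?_
  rw [mul_assoc]
  gcongr
  exact sum_le_of_tsum_div_le_one ((hloc x).subset fun _ => right_ne_zero_of_mul)
    (fun y => mul_nonneg (sq_nonneg _) (hμ x y)) (hν x) (hadapt1 x) T

lemma exists_finset_superset_forall_adj_mem {V : Type*} {μ : V → V → ℝ}
    (hloc : ∀ x, {y | μ x y ≠ 0}.Finite) (S : Finset V) :
    ∃ T : Finset V, S ⊆ T ∧ ∀ x ∈ S, ∀ y, μ x y ≠ 0 → y ∈ T :=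
  ⟨S ∪ S.biUnion fun x => (hloc x).toFinset, subset_union_left, fun x hx _ hy =>
    mem_union_right _ (mem_biUnion.2 ⟨x, hx, (hloc x).mem_toFinset.2 hy⟩)⟩

theorem tail_estimate_long_time_general
    (V : Type*) (μ : V → V → ℝ) (ν : V → ℝ) (dν : V → V → ℝ)
    (hμsymm : ∀ x y, μ x y = μ y x) (hμnn : ∀ x y, 0 ≤ μ x y)
    (hν : ∀ x, 0 < ν x) (hloc : ∀ x, {y | μ x y ≠ 0}.Finite)
    (hdsymm : ∀ x y, dν x y = dν y x) (hd0 : ∀ x, dν x x = 0)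
    (hdtri : ∀ x y z, dν x z ≤ dν x y + dν y z)
    (hadapt1 : ∀ x, (∑' y, dν x y ^ 2 * μ x y) / ν x ≤ 1)
    (hadapt2 : ∀ x y, 0 < μ x y → dν x y ≤ 1)
    (o : V) (u u' : ℝ → V → ℝ)
    (hunn : ∀ t x, 0 ≤ t → 0 ≤ u t x)
    (S : Finset V) (hsupp : ∀ t x, x ∉ S → u t x = 0)
    (hu0 : ∀ z, u 0 z = if z = o then (Real.sqrt (ν o))⁻¹ else 0)
    (hderiv : ∀ t x, 0 ≤ t →
      HasDerivWithinAt (fun s => u s x) (u' t x) (Set.Ici 0) t)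
    (hsub : ∀ t x, 0 ≤ t → u' t x ≤ (∑' y, (u t y - u t x) * μ x y) / ν x)
    (t R : ℝ) (hR : 0 < R) (ht : R ≤ t) :
    ∑' z, (if R ≤ dν o z then u t z ^ 2 * ν z else 0) ≤ Real.exp (-(R ^ 2) / (8 * t)) := by
  set κ := R / (2 * t)
  have hκ : 0 ≤ κ := by have := hR.trans_le ht; positivity
  obtain ⟨T, hST, hnbr⟩ := exists_finset_superset_forall_adj_mem hloc S
  have ho : o ∈ S := by
    by_contra ho
    simpa [hu0, (sqrt_pos.2 (hν o)).ne'] using hsupp 0 o ho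
  have hEt := weightedEnergy_le_mul_exp T ν _ μ hμsymm hμnn (fun x _ => hν x) hunn hderiv
    (fun s hs x _ => (tsum_sub_mul_eq_sum (hsupp s) hST hnbr x).symm ▸ hsub s x hs)
    (fun x _ => sum_sq_exp_mul_dist_sub_mul_le T hμnn hν hloc hdsymm hdtri hadapt1 hadapt2 hκ o x)
    (hR.trans_le ht).le
  rw [funext hu0, weightedEnergy_ite_eq ν _ (hST ho) (hν o), hd0, mul_zero, exp_zero, one_pow,
    one_mul] at hEt
  calc ∑' z, (if R ≤ dν o z then u t z ^ 2 * ν z else 0)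
      ≤ exp (-(2 * κ * R)) * weightedEnergy T ν (fun z => exp (κ * dν o z)) (u t) :=
        tsum_ite_le_exp_mul_weightedEnergy T (fun x => (hν x).le)
          (fun z hz => hsupp t z fun hzS => hz (hST hzS)) hκ R
    _ ≤ exp (-(2 * κ * R)) * exp (κ ^ 2 * exp (2 * κ) * t) := by gcongr
    _ = exp (κ ^ 2 * exp (2 * κ) * t - 2 * κ * R) := by rw [← exp_add]; ring_nf
    _ ≤ exp (-(R ^ 2) / (8 * t)) := exp_le_exp.2 (sq_mul_exp_mul_sub_le hR ht)

/-- Tail estimate for a positive subsolution started as a normalized point mass. -/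
theorem tail_estimate_long_time
    (V : Type*) (μ : V → V → ℝ) (ν : V → ℝ) (dν : V → V → ℝ)
    (hμsymm : ∀ x y, μ x y = μ y x) (hμnn : ∀ x y, 0 ≤ μ x y)
    (hν : ∀ x, 0 < ν x) (hloc : ∀ x, {y | μ x y ≠ 0}.Finite)
    (hdsymm : ∀ x y, dν x y = dν y x) (hd0 : ∀ x, dν x x = 0)
    (hdnn : ∀ x y, 0 ≤ dν x y)
    (hdtri : ∀ x y z, dν x z ≤ dν x y + dν y z)
    (hadapt1 : ∀ x, (∑' y, dν x y ^ 2 * μ x y) / ν x ≤ 1)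
    (hadapt2 : ∀ x y, 0 < μ x y → dν x y ≤ 1)
    (o : V) (u u' : ℝ → V → ℝ)
    (hunn : ∀ t x, 0 ≤ t → 0 ≤ u t x)
    (S : Finset V) (hsupp : ∀ t x, x ∉ S → u t x = 0)
    (hu0 : ∀ z, u 0 z = if z = o then (Real.sqrt (ν o))⁻¹ else 0)
    (hderiv : ∀ t x, 0 ≤ t →
      HasDerivWithinAt (fun s => u s x) (u' t x) (Set.Ici 0) t)
    (hsub : ∀ t x, 0 ≤ t → u' t x ≤ (∑' y, (u t y - u t x) * μ x y) / ν x)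
    (t R : ℝ) (hR : 0 < R) (ht : R ≤ t) :
    ∑' z, (if R ≤ dν o z then u t z ^ 2 * ν z else 0) ≤ Real.exp (-(R ^ 2) / (8 * t)) :=
  tail_estimate_long_time_general V μ ν dν hμsymm hμnn hν hloc hdsymm hd0 hdtri hadapt1 hadapt2 o u
    u' hunn S hsupp hu0 hderiv hsub t R hR ht
end

section
/- Let u : [0,∞) × V → [0,∞) be a positive subsolution of the heat equation on a weighted graph with finite spatial support, with initial condition u(0,z) = ν_o^{-1/2} 1_{z=o}. Then for all 0 < t ≤ R: Σ_{z : d_ν(o,z) ≥ R} u(t,z)² ν_z ≤ exp(−R log(1.01 R / t) + 120). -/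
open Classical

/-!
Davies' exponential perturbation method. For `ξ = l · min (d(o, ·), R)`, which is `l`-Lipschitz
for `dν`, consider the weighted energy `E(s) = ∑ u(s,z)² e^{2ξ(z)} ν_z`, so that `E(0) = 1`.
Symmetrizing over the edges, the elementary inequality
`2a e^{2c}(b - a) + 2b e^{2d}(a - b) ≤ 2(cosh(c - d) - 1)(a² e^{2c} + b² e^{2d})`
together with `cosh(s l) - 1 ≤ (cosh l - 1) s²` for `|s| ≤ 1` and the adaptedness of `dν`
gives `E' ≤ 2(cosh l - 1) E`, hence `E(t) ≤ e^{2(cosh l - 1)t}` by Grönwall. Since `ξ = lR` on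
`{d(o, ·) ≥ R}`, the tail is at most `e^{2(cosh l - 1)t - 2lR}`, and the choice
`l = max (3/2) (log (1.01 R / t))` makes the exponent at most `-R log (1.01 R / t)`.
-/

open Real Finset Set
open scoped Nat

namespace Real

lemma cosh_mul_le_one_add_mul_sq {s : ℝ} (hs : |s| ≤ 1) (x : ℝ) :
    cosh (s * x) ≤ 1 + (cosh x - 1) * s ^ 2 := by
  have hsum : HasSum (fun n : ℕ ↦ s ^ 2 * (x ^ (2 * n) / (2 * n)!) +
      if n = 0 then 1 - s ^ 2 else 0) (1 + (cosh x - 1) * s ^ 2) := by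
    rw [show 1 + (cosh x - 1) * s ^ 2 = s ^ 2 * cosh x + (1 - s ^ 2) by ring]
    exact ((hasSum_cosh x).mul_left (s ^ 2)).add (hasSum_ite_eq 0 (1 - s ^ 2))
  refine hasSum_le (fun n ↦ ?_) (hasSum_cosh (s * x)) hsum
  rcases n.eq_zero_or_pos with rfl | hn
  · simp
  · have hs2 : s ^ (2 * n) ≤ s ^ 2 := by
      rw [pow_mul]
      exact pow_le_of_le_one (sq_nonneg s) (by nlinarith [sq_abs s, abs_nonneg s]) hn.ne'
    rw [if_neg hn.ne', add_zero, mul_pow, ← mul_div_assoc]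
    gcongr
    rw [pow_mul]
    positivity

lemma cosh_three_halves_lt : cosh 1.5 < 2.4 := by
  have hcube : exp 1.5 ^ 2 = exp 1 ^ 3 := by
    rw [← exp_nat_mul, ← exp_nat_mul]; norm_num
  have he := exp_pos 1.5
  have hlo : 4 < exp 1.5 := by
    have : (2.7 : ℝ) ^ 3 < exp 1 ^ 3 :=
      pow_lt_pow_left₀ (by linarith [exp_one_gt_d9]) (by norm_num) (by norm_num)
    nlinarith
  have hhi : exp 1.5 < 4.5 := by
    have : exp 1 ^ 3 < (2.72 : ℝ) ^ 3 :=
      pow_lt_pow_left₀ (by linarith [exp_one_lt_d9]) (exp_pos 1).le (by norm_num)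
    nlinarith
  rw [cosh_eq, exp_neg]
  have : (exp 1.5)⁻¹ < 1 / 4 := by
    rw [inv_lt_comm₀ he (by norm_num)]; norm_num; linarith
  linarith

lemma two_mul_exp_sq_mul_sub_add_le (a b c d : ℝ) :
    2 * a * exp c ^ 2 * (b - a) + 2 * b * exp d ^ 2 * (a - b) ≤
      2 * (cosh (c - d) - 1) * (a ^ 2 * exp c ^ 2 + b ^ 2 * exp d ^ 2) := by
  have hp := exp_pos c
  have hq := exp_pos d
  have hcosh : 2 * cosh (c - d) = exp c / exp d + exp d / exp c := by
    rw [cosh_eq, exp_sub, neg_sub, exp_sub]; ring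
  have key : 2 * (cosh (c - d) - 1) * (a ^ 2 * exp c ^ 2 + b ^ 2 * exp d ^ 2) -
      (2 * a * exp c ^ 2 * (b - a) + 2 * b * exp d ^ 2 * (a - b)) =
      (exp c ^ 2 + exp d ^ 2) / (exp c * exp d) * (a * exp c - b * exp d) ^ 2 := by
    rw [mul_sub, mul_comm 2 (cosh _), mul_assoc, mul_comm (cosh _), hcosh]
    field_simp
    ring
  have : 0 ≤ (exp c ^ 2 + exp d ^ 2) / (exp c * exp d) * (a * exp c - b * exp d) ^ 2 := by
    positivity
  linarith

end Real

lemma Finset.sum_sum_le_sum_sum_of_add_swap_le {ι M : Type*} [AddCommMonoid M] [LinearOrder M]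
    [IsOrderedCancelAddMonoid M] (s : Finset ι) {f g : ι → ι → M}
    (h : ∀ i j, f i j + f j i ≤ g i j + g j i) :
    ∑ i ∈ s, ∑ j ∈ s, f i j ≤ ∑ i ∈ s, ∑ j ∈ s, g i j := by
  have hsum : ∑ i ∈ s, ∑ j ∈ s, f i j + ∑ i ∈ s, ∑ j ∈ s, f i j ≤
      ∑ i ∈ s, ∑ j ∈ s, g i j + ∑ i ∈ s, ∑ j ∈ s, g i j := by
    conv_lhs => arg 2; rw [Finset.sum_comm]
    conv_rhs => arg 2; rw [Finset.sum_comm]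
    simp only [← Finset.sum_add_distrib]
    exact Finset.sum_le_sum fun i _ ↦ Finset.sum_le_sum fun j _ ↦ h i j
  by_contra! hlt
  exact (add_lt_add hlt hlt).not_ge hsum

lemma le_mul_exp_of_hasDerivWithinAt_Ici_le {E E' : ℝ → ℝ} {K a b : ℝ} (hab : a ≤ b)
    (hcont : ContinuousOn E (Icc a b))
    (hE : ∀ s ∈ Ico a b, HasDerivWithinAt E (E' s) (Ici s) s)
    (hE' : ∀ s ∈ Ico a b, E' s ≤ K * E s) :
    E b ≤ E a * exp (K * (b - a)) := by
  rw [← gronwallBound_ε0]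
  exact le_gronwallBound_of_liminf_deriv_right_le hcont
    (fun s hs _ hr ↦ (hE s hs).liminf_right_slope_le hr) le_rfl
    (fun s hs ↦ by simpa using hE' s hs) b ⟨hab, le_rfl⟩

section WeightedGraph

variable {V : Type*} {μ : V → V → ℝ} {ν : V → ℝ} {dν : V → V → ℝ}

lemma sum_two_mul_exp_sq_mul_sum_sub_mul_le (hμsymm : ∀ x y, μ x y = μ y x)
    (hμnn : ∀ x y, 0 ≤ μ x y) (T : Finset V) (f ξ : V → ℝ) {K : ℝ}
    (hK : ∀ x ∈ T, ∑ y ∈ T, 2 * (cosh (ξ x - ξ y) - 1) * μ x y ≤ K * ν x) :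
    ∑ x ∈ T, 2 * f x * exp (ξ x) ^ 2 * ∑ y ∈ T, (f y - f x) * μ x y ≤
      K * ∑ x ∈ T, f x ^ 2 * (exp (ξ x) ^ 2 * ν x) := by
  have hpair : ∀ x y,
      2 * f x * exp (ξ x) ^ 2 * ((f y - f x) * μ x y) +
          2 * f y * exp (ξ y) ^ 2 * ((f x - f y) * μ y x) ≤
        f x ^ 2 * exp (ξ x) ^ 2 * (2 * (cosh (ξ x - ξ y) - 1) * μ x y) +
          f y ^ 2 * exp (ξ y) ^ 2 * (2 * (cosh (ξ y - ξ x) - 1) * μ y x) := by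
    intro x y
    rw [hμsymm y x, ← neg_sub (ξ x), cosh_neg]
    nlinarith [mul_le_mul_of_nonneg_right
      (two_mul_exp_sq_mul_sub_add_le (f x) (f y) (ξ x) (ξ y)) (hμnn x y)]
  calc ∑ x ∈ T, 2 * f x * exp (ξ x) ^ 2 * ∑ y ∈ T, (f y - f x) * μ x y
      = ∑ x ∈ T, ∑ y ∈ T, 2 * f x * exp (ξ x) ^ 2 * ((f y - f x) * μ x y) := by
        simp only [Finset.mul_sum]
    _ ≤ ∑ x ∈ T, ∑ y ∈ T,
          f x ^ 2 * exp (ξ x) ^ 2 * (2 * (cosh (ξ x - ξ y) - 1) * μ x y) :=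
        T.sum_sum_le_sum_sum_of_add_swap_le hpair
    _ = ∑ x ∈ T,
          f x ^ 2 * exp (ξ x) ^ 2 * ∑ y ∈ T, 2 * (cosh (ξ x - ξ y) - 1) * μ x y := by
        simp only [Finset.mul_sum]
    _ ≤ ∑ x ∈ T, f x ^ 2 * exp (ξ x) ^ 2 * (K * ν x) :=
        Finset.sum_le_sum fun x hx ↦ mul_le_mul_of_nonneg_left (hK x hx) (by positivity)
    _ = K * ∑ x ∈ T, f x ^ 2 * (exp (ξ x) ^ 2 * ν x) := by
        rw [Finset.mul_sum]; exact Finset.sum_congr rfl fun x _ ↦ by ring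

lemma sum_two_mul_cosh_sub_one_mul_le (hμnn : ∀ x y, 0 ≤ μ x y) {x : V}
    (hνx : 0 < ν x) (hloc : {y | μ x y ≠ 0}.Finite)
    (hadapt1 : (∑' y, dν x y ^ 2 * μ x y) / ν x ≤ 1)
    (hadapt2 : ∀ y, 0 < μ x y → dν x y ≤ 1) (hdnn : ∀ y, 0 ≤ dν x y)
    {ξ : V → ℝ} {l : ℝ} (hξ : ∀ y, |ξ x - ξ y| ≤ l * dν x y) (T : Finset V) :
    ∑ y ∈ T, 2 * (cosh (ξ x - ξ y) - 1) * μ x y ≤ 2 * (cosh l - 1) * ν x := by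
  have hterm : ∀ y, 2 * (cosh (ξ x - ξ y) - 1) * μ x y ≤
      2 * (cosh l - 1) * (dν x y ^ 2 * μ x y) := by
    intro y
    rcases (hμnn x y).eq_or_lt with hμ | hμ
    · simp [← hμ]
    have hcosh : cosh (ξ x - ξ y) ≤ cosh (dν x y * l) := by
      rw [cosh_le_cosh, mul_comm]
      exact (hξ y).trans (le_abs_self _)
    have := cosh_mul_le_one_add_mul_sq (abs_le.2 ⟨by linarith [hdnn y], hadapt2 y hμ⟩) l
    nlinarith
  have hsummable : Summable fun y ↦ dν x y ^ 2 * μ x y :=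
    summable_of_ne_finset_zero (s := hloc.toFinset) fun y hy ↦ by simp_all
  calc ∑ y ∈ T, 2 * (cosh (ξ x - ξ y) - 1) * μ x y
      ≤ ∑ y ∈ T, 2 * (cosh l - 1) * (dν x y ^ 2 * μ x y) :=
        Finset.sum_le_sum fun y _ ↦ hterm y
    _ = 2 * (cosh l - 1) * ∑ y ∈ T, dν x y ^ 2 * μ x y := by rw [Finset.mul_sum]
    _ ≤ 2 * (cosh l - 1) * ν x := by
        gcongr
        · linarith [one_le_cosh l]
        · refine (hsummable.sum_le_tsum T fun y _ ↦ ?_).trans ((div_le_one hνx).1 hadapt1)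
          exact mul_nonneg (sq_nonneg _) (hμnn x y)

lemma exists_finset_superset_forall_notMem (hloc : ∀ x, {y | μ x y ≠ 0}.Finite)
    (S : Finset V) :
    ∃ T : Finset V, S ⊆ T ∧ ∀ x ∈ S, ∀ y ∉ T, μ x y = 0 := by
  refine ⟨S ∪ S.biUnion fun x ↦ (hloc x).toFinset, subset_union_left, fun x hx y hy ↦ ?_⟩
  by_contra hμ
  exact hy (mem_union_right _ (mem_biUnion.2 ⟨x, hx, (hloc x).mem_toFinset.2 hμ⟩))

lemma sum_two_mul_mul_le_of_le_laplacian (hμsymm : ∀ x y, μ x y = μ y x)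
    (hμnn : ∀ x y, 0 ≤ μ x y) (hν : ∀ x, 0 < ν x)
    (hloc : ∀ x, {y | μ x y ≠ 0}.Finite)
    (hadapt1 : ∀ x, (∑' y, dν x y ^ 2 * μ x y) / ν x ≤ 1)
    (hadapt2 : ∀ x y, 0 < μ x y → dν x y ≤ 1) (hdnn : ∀ x y, 0 ≤ dν x y)
    {ξ : V → ℝ} {l : ℝ} (hξ : ∀ x y, |ξ x - ξ y| ≤ l * dν x y)
    (S : Finset V) {f f' : V → ℝ} (hf : ∀ x, 0 ≤ f x) (hfS : ∀ x ∉ S, f x = 0)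
    (hf' : ∀ x, f' x ≤ (∑' y, (f y - f x) * μ x y) / ν x) :
    ∑ x ∈ S, 2 * f x * f' x * (exp (ξ x) ^ 2 * ν x) ≤
      2 * (cosh l - 1) * ∑ x ∈ S, f x ^ 2 * (exp (ξ x) ^ 2 * ν x) := by
  obtain ⟨T, hST, hT⟩ := exists_finset_superset_forall_notMem hloc S
  have hlaplacian : ∀ x ∈ S, 2 * f x * f' x * (exp (ξ x) ^ 2 * ν x) ≤
      2 * f x * exp (ξ x) ^ 2 * ∑ y ∈ T, (f y - f x) * μ x y := by
    intro x hx
    have htsum : ∑' y, (f y - f x) * μ x y = ∑ y ∈ T, (f y - f x) * μ x y :=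
      tsum_eq_sum fun y hy ↦ by rw [hT x hx y hy, mul_zero]
    rw [← htsum]
    calc 2 * f x * f' x * (exp (ξ x) ^ 2 * ν x)
        = 2 * f x * exp (ξ x) ^ 2 * ν x * f' x := by ring
      _ ≤ 2 * f x * exp (ξ x) ^ 2 * ν x * ((∑' y, (f y - f x) * μ x y) / ν x) := by
          gcongr
          · exact mul_nonneg (mul_nonneg (mul_nonneg zero_le_two (hf x)) (sq_nonneg _))
              (hν x).le
          · exact hf' x
      _ = 2 * f x * exp (ξ x) ^ 2 * ∑' y, (f y - f x) * μ x y := by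
          field_simp [(hν x).ne']
  calc ∑ x ∈ S, 2 * f x * f' x * (exp (ξ x) ^ 2 * ν x)
      ≤ ∑ x ∈ S, 2 * f x * exp (ξ x) ^ 2 * ∑ y ∈ T, (f y - f x) * μ x y :=
        sum_le_sum hlaplacian
    _ = ∑ x ∈ T, 2 * f x * exp (ξ x) ^ 2 * ∑ y ∈ T, (f y - f x) * μ x y :=
        sum_subset hST fun x _ hx ↦ by simp [hfS x hx]
    _ ≤ 2 * (cosh l - 1) * ∑ x ∈ T, f x ^ 2 * (exp (ξ x) ^ 2 * ν x) :=
        sum_two_mul_exp_sq_mul_sum_sub_mul_le hμsymm hμnn T f ξ fun x _ ↦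
          sum_two_mul_cosh_sub_one_mul_le hμnn (hν x) (hloc x) (hadapt1 x) (hadapt2 x)
            (hdnn x) (hξ x) T
    _ = 2 * (cosh l - 1) * ∑ x ∈ S, f x ^ 2 * (exp (ξ x) ^ 2 * ν x) := by
        rw [sum_subset hST fun x _ hx ↦ by simp [hfS x hx]]

lemma sum_sq_mul_exp_sq_mul_le (hμsymm : ∀ x y, μ x y = μ y x)
    (hμnn : ∀ x y, 0 ≤ μ x y) (hν : ∀ x, 0 < ν x)
    (hloc : ∀ x, {y | μ x y ≠ 0}.Finite)
    (hadapt1 : ∀ x, (∑' y, dν x y ^ 2 * μ x y) / ν x ≤ 1)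
    (hadapt2 : ∀ x y, 0 < μ x y → dν x y ≤ 1) (hdnn : ∀ x y, 0 ≤ dν x y)
    {ξ : V → ℝ} {l : ℝ} (hξ : ∀ x y, |ξ x - ξ y| ≤ l * dν x y)
    (S : Finset V) {u u' : ℝ → V → ℝ} (hunn : ∀ t x, 0 ≤ t → 0 ≤ u t x)
    (hsupp : ∀ t x, x ∉ S → u t x = 0)
    (hderiv : ∀ t x, 0 ≤ t → HasDerivWithinAt (fun s ↦ u s x) (u' t x) (Ici 0) t)
    (hsub : ∀ t x, 0 ≤ t → u' t x ≤ (∑' y, (u t y - u t x) * μ x y) / ν x)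
    {t : ℝ} (ht : 0 ≤ t) :
    ∑ z ∈ S, u t z ^ 2 * (exp (ξ z) ^ 2 * ν z) ≤
      (∑ z ∈ S, u 0 z ^ 2 * (exp (ξ z) ^ 2 * ν z)) * exp (2 * (cosh l - 1) * t) := by
  have hE : ∀ s, 0 ≤ s →
      HasDerivWithinAt (fun r ↦ ∑ z ∈ S, u r z ^ 2 * (exp (ξ z) ^ 2 * ν z))
      (∑ z ∈ S, 2 * u s z * u' s z * (exp (ξ z) ^ 2 * ν z)) (Ici 0) s := fun s hs ↦
    HasDerivWithinAt.fun_sum fun z _ ↦ by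
      simpa [mul_assoc] using ((hderiv s z hs).pow 2).mul_const (exp (ξ z) ^ 2 * ν z)
  simpa using le_mul_exp_of_hasDerivWithinAt_Ici_le ht
    (fun s hs ↦ (hE s hs.1).continuousWithinAt.mono (Icc_subset_Ici_self))
    (fun s hs ↦ (hE s hs.1).mono (Ici_subset_Ici.2 hs.1))
    (fun s hs ↦ sum_two_mul_mul_le_of_le_laplacian hμsymm hμnn hν hloc hadapt1 hadapt2 hdnn hξ
      S (hunn s · hs.1) (hsupp s) (hsub s · hs.1))

lemma tsum_ite_sq_mul_le_exp_mul_sum {P : V → Prop} [DecidablePred P] (hν : ∀ x, 0 ≤ ν x)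
    (S : Finset V) {f ξ : V → ℝ} (hfS : ∀ x ∉ S, f x = 0) {c : ℝ}
    (hξ : ∀ x, P x → c ≤ ξ x) :
    ∑' x, (if P x then f x ^ 2 * ν x else 0) ≤
      exp (-(2 * c)) * ∑ x ∈ S, f x ^ 2 * (exp (ξ x) ^ 2 * ν x) := by
  rw [tsum_eq_sum (s := S) fun x hx ↦ by simp [hfS x hx], mul_sum]
  refine sum_le_sum fun x _ ↦ ?_
  split_ifs with hP
  · have : 1 ≤ exp (-(2 * c)) * exp (ξ x) ^ 2 := by
      rw [← exp_nat_mul, ← exp_add]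
      exact one_le_exp (by push_cast; linarith [hξ x hP])
    nlinarith [mul_nonneg (sq_nonneg (f x)) (hν x)]
  · have := hν x
    positivity

lemma sum_ite_inv_sqrt_sq_mul {o : V} (hνo : 0 < ν o) {S : Finset V} (ho : o ∈ S)
    (ξ : V → ℝ) :
    ∑ z ∈ S, (if z = o then (√(ν o))⁻¹ else 0) ^ 2 * (exp (ξ z) ^ 2 * ν z) =
      exp (ξ o) ^ 2 := by
  rw [sum_eq_single_of_mem o ho fun z _ hz ↦ by simp [hz], if_pos rfl, inv_pow,
    sq_sqrt hνo.le]
  field_simp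

lemma abs_mul_min_sub_mul_min_le (hdsymm : ∀ x y, dν x y = dν y x)
    (hdtri : ∀ x y z, dν x z ≤ dν x y + dν y z) {l : ℝ} (hl : 0 ≤ l) (o : V) (R : ℝ)
    (x y : V) : |l * min (dν o x) R - l * min (dν o y) R| ≤ l * dν x y := by
  rw [← mul_sub, abs_mul, abs_of_nonneg hl]
  refine mul_le_mul_of_nonneg_left ((abs_min_sub_min_le_max _ _ _ _).trans ?_) hl
  rw [sub_self, abs_zero, max_le_iff, abs_sub_le_iff]
  refine ⟨⟨?_, ?_⟩, ?_⟩
  · linarith [hdtri o y x, hdsymm x y]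
  · linarith [hdtri o x y]
  · linarith [hdtri x y x, hdsymm x y, hdtri x x x]

end WeightedGraph

-- `l = L` is the optimal weight; flooring it at `3/2` keeps the regime `t ≈ R` under control.
lemma two_mul_cosh_sub_one_mul_sub_le {t R L : ℝ} (hR : 0 < R) (hL : 0 ≤ L)
    (htL : t * exp L = 1.01 * R) :
    2 * (cosh (max 1.5 L) - 1) * t - 2 * (max 1.5 L * R) ≤ -(R * L) := by
  have hexp := exp_pos L
  have ht : 0 < t := pos_of_mul_pos_left (htL ▸ by positivity) hexp.le
  rcases le_total L 1.5 with hL1 | hL1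
  · rw [max_eq_left hL1]
    have hmono : 3 ≤ (3 - L) * exp L := by
      nlinarith [add_one_le_exp L, mul_le_mul_of_nonneg_left (add_one_le_exp L)
        (by linarith : (0 : ℝ) ≤ 3 - L)]
    have : 2.8 * t ≤ (3 - L) * R := by
      refine le_of_mul_le_mul_right ?_ hexp
      nlinarith
    nlinarith [cosh_three_halves_lt]
  · rw [max_eq_right hL1]
    have hneg : exp (-L) ≤ 1 := exp_le_one_iff.2 (by linarith)
    have : 2 * (cosh L - 1) * t ≤ t * exp L := by
      rw [cosh_eq]; nlinarith
    nlinarith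

/-- Tail estimate for a positive subsolution started as a normalized point mass. -/
theorem tail_estimate_short_time
    (V : Type*) (μ : V → V → ℝ) (ν : V → ℝ) (dν : V → V → ℝ)
    (hμsymm : ∀ x y, μ x y = μ y x) (hμnn : ∀ x y, 0 ≤ μ x y)
    (hν : ∀ x, 0 < ν x) (hloc : ∀ x, {y | μ x y ≠ 0}.Finite)
    (hdsymm : ∀ x y, dν x y = dν y x) (hd0 : ∀ x, dν x x = 0)
    (hdnn : ∀ x y, 0 ≤ dν x y)
    (hdtri : ∀ x y z, dν x z ≤ dν x y + dν y z)
    (hadapt1 : ∀ x, (∑' y, dν x y ^ 2 * μ x y) / ν x ≤ 1)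
    (hadapt2 : ∀ x y, 0 < μ x y → dν x y ≤ 1)
    (o : V) (u u' : ℝ → V → ℝ)
    (hunn : ∀ t x, 0 ≤ t → 0 ≤ u t x)
    (S : Finset V) (hsupp : ∀ t x, x ∉ S → u t x = 0)
    (hu0 : ∀ z, u 0 z = if z = o then (Real.sqrt (ν o))⁻¹ else 0)
    (hderiv : ∀ t x, 0 ≤ t →
      HasDerivWithinAt (fun s => u s x) (u' t x) (Set.Ici 0) t)
    (hsub : ∀ t x, 0 ≤ t → u' t x ≤ (∑' y, (u t y - u t x) * μ x y) / ν x)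
    (t R : ℝ) (hR : 0 < R) (ht0 : 0 < t) (ht : t ≤ R) :
    ∑' z, (if R ≤ dν o z then u t z ^ 2 * ν z else 0) ≤ Real.exp (-(R * Real.log (1.01 * R / t)) + 120) := by
  set L := log (1.01 * R / t)
  have hL : 0 ≤ L := log_nonneg (by rw [le_div_iff₀ ht0]; linarith)
  have htL : t * exp L = 1.01 * R := by
    rw [exp_log (by positivity)]; field_simp
  set l := max 1.5 L
  have hl : 0 ≤ l := le_max_of_le_left (by norm_num)
  have hexponent : 2 * (cosh l - 1) * t - 2 * (l * R) ≤ -(R * L) :=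
    two_mul_cosh_sub_one_mul_sub_le hR hL htL
  have ho : o ∈ S := by
    by_contra h
    simpa [hu0, (sqrt_pos.2 (hν o)).ne'] using hsupp 0 o h
  have henergy := sum_sq_mul_exp_sq_mul_le hμsymm hμnn hν hloc hadapt1 hadapt2 hdnn
    (ξ := fun z ↦ l * min (dν o z) R) (abs_mul_min_sub_mul_min_le hdsymm hdtri hl o R)
    S hunn hsupp hderiv hsub ht0.le
  simp only [hu0, sum_ite_inv_sqrt_sq_mul (hν o) ho, hd0, min_eq_left hR.le, mul_zero,
    exp_zero, one_pow, one_mul] at henergy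
  calc ∑' z, (if R ≤ dν o z then u t z ^ 2 * ν z else 0)
      ≤ exp (-(2 * (l * R))) * ∑ z ∈ S, u t z ^ 2 * (exp (l * min (dν o z) R) ^ 2 * ν z) :=
        tsum_ite_sq_mul_le_exp_mul_sum (fun x ↦ (hν x).le) S (hsupp t) fun z hz ↦ by
          rw [min_eq_right hz]
    _ ≤ exp (-(2 * (l * R))) * exp (2 * (cosh l - 1) * t) := by gcongr
    _ = exp (2 * (cosh l - 1) * t - 2 * (l * R)) := by rw [← exp_add]; ring_nf
    _ ≤ exp (-(R * L) + 120) :=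
        exp_le_exp.2 (by linarith)
end

section
/- Fix τ > 0 and a function ρ : V → [0,∞) with |ρ(x) − ρ(y)| ≤ d_ν(x,y) for adjacent x,y, where d_ν(x,y) ≤ 1 for x ∼ y. Define h(t,z) = exp{(ρ(z) − (e/4)(t+τ)) · log(max(1, ρ(z)/((e/4)(t+τ)))) − t/τ}. Then for all t ≥ 0 and all adjacent y ∼ z with ε = d_ν(y,z): |h(t,y) − h(t,z)|² / (4 h(t,y) h(t,z)) ≤ −ε² (∂/∂t) log h(t,y). -/
/-!
Put `c = (e/4)(t+τ)` and `Φ x = (x - 1) log (max 1 x)` (`subOneMulLogMaxOne`), so that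
`log h(t,w) = c Φ(ρ w / c) - t/τ` and the left-hand side is `(cosh d - 1)/2` with `d = c (Φ(ρ y / c) - Φ(ρ z / c))`.
The function `Φ` is `C¹` with nonnegative, nondecreasing derivative `Φ'`, so the mean value theorem
gives `|d| ≤ ε Y` with `Y = Φ'((ρ y + 1)/c)`. Comparing power series, `cosh (ε Y) - 1 ≤ ε² (cosh Y - 1)`
for `0 ≤ ε ≤ 1`, and the chord bound `e^{1-z} ≤ (1 - z) e + z` on `[0, 1]` gives
`cosh Φ'(a) - 1 ≤ (e/2)(a - 1)` for `a ≥ 1`. What is left over, `(e/2)/c = 2/(t+τ)`, is at most `2/τ`.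
-/

open Real Set

noncomputable def subOneMulLogMaxOne (x : ℝ) : ℝ := (x - 1) * log (max 1 x)

noncomputable def subOneMulLogMaxOneDeriv (x : ℝ) : ℝ := log (max 1 x) + 1 - (max 1 x)⁻¹

lemma subOneMulLogMaxOneDeriv_of_le_one {x : ℝ} (hx : x ≤ 1) : subOneMulLogMaxOneDeriv x = 0 := by
  simp [subOneMulLogMaxOneDeriv, max_eq_left hx]

lemma hasDerivAt_subOneMulLogMaxOne (x : ℝ) :
    HasDerivAt subOneMulLogMaxOne (subOneMulLogMaxOneDeriv x) x := by
  have hright : ∀ x, 1 ≤ x →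
      HasDerivWithinAt subOneMulLogMaxOne (subOneMulLogMaxOneDeriv x) (Ici 1) x := by
    intro x hx
    have hlog := ((hasDerivAt_id x).sub_const 1).mul (hasDerivAt_log (by positivity))
    refine (hlog.hasDerivWithinAt.congr (fun y hy => ?_) ?_).congr_deriv ?_
    · simp [subOneMulLogMaxOne, max_eq_right (mem_Ici.1 hy)]
    · simp [subOneMulLogMaxOne, max_eq_right hx]
    · simp only [subOneMulLogMaxOneDeriv, max_eq_right hx, id]
      field_simp
      ring
  have hleft : ∀ x, x ≤ 1 →
      HasDerivWithinAt subOneMulLogMaxOne (subOneMulLogMaxOneDeriv x) (Iic 1) x := by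
    intro x hx
    rw [subOneMulLogMaxOneDeriv_of_le_one hx]
    refine (hasDerivWithinAt_const x _ 0).congr (fun y hy => ?_) ?_
    · simp [subOneMulLogMaxOne, max_eq_left (mem_Iic.1 hy)]
    · simp [subOneMulLogMaxOne, max_eq_left hx]
  rcases lt_trichotomy x 1 with hx | rfl | hx
  · exact (hleft x hx.le).hasDerivAt (Iic_mem_nhds hx)
  · simpa [Iic_union_Ici] using (hleft 1 le_rfl).union (hright 1 le_rfl)
  · exact (hright x hx.le).hasDerivAt (Ici_mem_nhds hx)

lemma subOneMulLogMaxOneDeriv_nonneg (x : ℝ) : 0 ≤ subOneMulLogMaxOneDeriv x := by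
  have hmax : 1 ≤ max 1 x := le_max_left 1 x
  have hinv : (max 1 x)⁻¹ ≤ 1 := inv_le_one_of_one_le₀ hmax
  have hlog : 0 ≤ log (max 1 x) := log_nonneg hmax
  unfold subOneMulLogMaxOneDeriv
  linarith

lemma monotone_subOneMulLogMaxOneDeriv : Monotone subOneMulLogMaxOneDeriv := by
  intro x y hxy
  have hmax : max 1 x ≤ max 1 y := max_le_max_left 1 hxy
  have hpos : 0 < max 1 x := lt_of_lt_of_le one_pos (le_max_left 1 x)
  have hlog := log_le_log hpos hmax
  have hinv := inv_anti₀ hpos hmax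
  unfold subOneMulLogMaxOneDeriv
  linarith

lemma abs_subOneMulLogMaxOne_sub_le (x y : ℝ) :
    |subOneMulLogMaxOne x - subOneMulLogMaxOne y| ≤
      subOneMulLogMaxOneDeriv (max x y) * |x - y| := by
  have := (convex_Iic (max x y)).norm_image_sub_le_of_norm_hasDerivWithin_le
    (C := subOneMulLogMaxOneDeriv (max x y))
    (fun z _ => (hasDerivAt_subOneMulLogMaxOne z).hasDerivWithinAt)
    (fun z hz => ?_) (le_max_right x y) (le_max_left x y)
  · simpa only [Real.norm_eq_abs] using this
  · rw [Real.norm_eq_abs, abs_of_nonneg (subOneMulLogMaxOneDeriv_nonneg z)]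
    exact monotone_subOneMulLogMaxOneDeriv hz

lemma mul_subOneMulLogMaxOneDeriv_sub (x : ℝ) :
    x * subOneMulLogMaxOneDeriv x - subOneMulLogMaxOne x = log (max 1 x) + max (x - 1) 0 := by
  rcases le_or_gt x 1 with hx | hx
  · simp [subOneMulLogMaxOneDeriv_of_le_one hx, subOneMulLogMaxOne, max_eq_left hx,
      max_eq_right (sub_nonpos.2 hx)]
  · simp only [subOneMulLogMaxOneDeriv, subOneMulLogMaxOne, max_eq_right hx.le,
      max_eq_left (sub_nonneg.2 hx.le)]
    field_simp
    ring

lemma exp_one_sub_le {z : ℝ} (hz0 : 0 ≤ z) (hz1 : z ≤ 1) :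
    exp (1 - z) ≤ (1 - z) * exp 1 + z := by
  simpa [smul_eq_mul] using
    convexOn_exp.2 (mem_univ 1) (mem_univ 0) (sub_nonneg.2 hz1) hz0 (sub_add_cancel 1 z)

lemma cosh_subOneMulLogMaxOneDeriv_sub_one_le (x : ℝ) :
    cosh (subOneMulLogMaxOneDeriv x) - 1 ≤ exp 1 / 2 * max (x - 1) 0 := by
  rcases le_or_gt x 1 with hx | hx
  · simp [subOneMulLogMaxOneDeriv_of_le_one hx, max_eq_right (sub_nonpos.2 hx)]
  set z := x⁻¹
  have hx0 : 0 < x := one_pos.trans hx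
  have hz0 : 0 < z := inv_pos.2 hx0
  have hz1 : z ≤ 1 := inv_le_one_of_one_le₀ hx.le
  have hxz : x * z = 1 := mul_inv_cancel₀ hx0.ne'
  have hexp : exp (subOneMulLogMaxOneDeriv x) = x * exp (1 - z) := by
    rw [subOneMulLogMaxOneDeriv, max_eq_right hx.le, add_sub_assoc, exp_add, exp_log hx0]
  have hexp_neg : exp (-subOneMulLogMaxOneDeriv x) = z * exp (-(1 - z)) := by
    rw [exp_neg, hexp, mul_inv, ← exp_neg]
  have hchord := mul_le_mul_of_nonneg_left (exp_one_sub_le hz0.le hz1) hx0.le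
  have hchord_eq : x * ((1 - z) * exp 1 + z) = (x - 1) * exp 1 + 1 := by
    linear_combination (1 - exp 1) * hxz
  have hsmall : z * exp (-(1 - z)) ≤ z :=
    mul_le_of_le_one_right hz0.le (exp_le_one_iff.2 (by linarith))
  rw [cosh_eq, hexp, hexp_neg, max_eq_left (by linarith)]
  linarith

lemma cosh_mul_sub_one_le {ε : ℝ} (hε0 : 0 ≤ ε) (hε1 : ε ≤ 1) (y : ℝ) :
    cosh (ε * y) - 1 ≤ ε ^ 2 * (cosh y - 1) := by
  have hsum : HasSum (fun n => ε ^ 2 * (y ^ (2 * n) / (2 * n).factorial) +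
      if n = 0 then 1 - ε ^ 2 else 0) (ε ^ 2 * cosh y + (1 - ε ^ 2)) :=
    ((hasSum_cosh y).mul_left _).add (hasSum_ite_eq 0 _)
  have := hasSum_le (fun n => ?_) (hasSum_cosh (ε * y)) hsum
  · linarith
  rcases n with _ | n
  · simp
  · have hεn : ε ^ (2 * (n + 1)) ≤ ε ^ 2 := pow_le_pow_of_le_one hε0 hε1 (by omega)
    simp only [mul_pow, if_neg n.succ_ne_zero, add_zero, mul_div_assoc]
    exact mul_le_mul_of_nonneg_right hεn
      (div_nonneg ((even_two_mul _).pow_nonneg y) (Nat.cast_nonneg _))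

lemma sub_mul_log_max_one_div_eq (p c : ℝ) :
    (p - c) * log (max 1 (p / c)) = c * subOneMulLogMaxOne (p / c) := by
  rcases eq_or_ne c 0 with rfl | hc
  · simp
  · rw [subOneMulLogMaxOne, ← mul_assoc, mul_sub, mul_div_cancel₀ p hc, mul_one]

lemma hasDerivAt_mul_subOneMulLogMaxOne_div {c : ℝ → ℝ} {c' t : ℝ} (p : ℝ)
    (hc : HasDerivAt c c' t) (hct : c t ≠ 0) :
    HasDerivAt (fun s => c s * subOneMulLogMaxOne (p / c s))
      (-c' * (log (max 1 (p / c t)) + max (p / c t - 1) 0)) t := by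
  have hx := (hasDerivAt_const t p).div hc hct
  refine (hc.mul ((hasDerivAt_subOneMulLogMaxOne _).comp t hx)).congr_deriv ?_
  rw [← mul_subOneMulLogMaxOneDeriv_sub]
  simp only [Function.comp_apply, Pi.div_apply]
  field_simp
  ring

lemma abs_mul_subOneMulLogMaxOne_div_sub_le {p q c ε : ℝ} (hc : 0 < c) (hpq : |p - q| ≤ ε)
    (hε : ε ≤ 1) :
    |c * subOneMulLogMaxOne (p / c) - c * subOneMulLogMaxOne (q / c)| ≤
      ε * subOneMulLogMaxOneDeriv ((p + 1) / c) := by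
  have hmax : max (p / c) (q / c) ≤ (p + 1) / c := by
    refine max_le ?_ ?_ <;> gcongr
    · linarith
    · linarith [(abs_le.1 hpq).1]
  calc |c * subOneMulLogMaxOne (p / c) - c * subOneMulLogMaxOne (q / c)|
      = c * |subOneMulLogMaxOne (p / c) - subOneMulLogMaxOne (q / c)| := by
        rw [← mul_sub, abs_mul, abs_of_pos hc]
    _ ≤ c * (subOneMulLogMaxOneDeriv (max (p / c) (q / c)) * |p / c - q / c|) := by
        gcongr
        exact abs_subOneMulLogMaxOne_sub_le _ _
    _ = subOneMulLogMaxOneDeriv (max (p / c) (q / c)) * |p - q| := by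
        rw [← sub_div, abs_div, abs_of_pos hc]
        field_simp
    _ ≤ subOneMulLogMaxOneDeriv ((p + 1) / c) * ε := by
        gcongr
        · exact subOneMulLogMaxOneDeriv_nonneg _
        · exact monotone_subOneMulLogMaxOneDeriv hmax
    _ = ε * subOneMulLogMaxOneDeriv ((p + 1) / c) := mul_comm _ _

lemma cosh_mul_subOneMulLogMaxOne_div_sub_sub_one_le {p q c ε : ℝ} (hc : 0 < c)
    (hpq : |p - q| ≤ ε) (hε : ε ≤ 1) :
    cosh (c * subOneMulLogMaxOne (p / c) - c * subOneMulLogMaxOne (q / c)) - 1 ≤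
      ε ^ 2 * (exp 1 / 2 * (1 / c + max (p / c - 1) 0)) := by
  set Y := subOneMulLogMaxOneDeriv ((p + 1) / c)
  have hε0 : 0 ≤ ε := (abs_nonneg _).trans hpq
  have hcosh : cosh (c * subOneMulLogMaxOne (p / c) - c * subOneMulLogMaxOne (q / c)) ≤
      cosh (ε * Y) := by
    rw [cosh_le_cosh, abs_of_nonneg (mul_nonneg hε0 (subOneMulLogMaxOneDeriv_nonneg _))]
    exact abs_mul_subOneMulLogMaxOne_div_sub_le hc hpq hε
  have hY : cosh Y - 1 ≤ exp 1 / 2 * (1 / c + max (p / c - 1) 0) := by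
    refine (cosh_subOneMulLogMaxOneDeriv_sub_one_le _).trans ?_
    rw [add_div, add_sub_right_comm, add_comm]
    gcongr
    exact max_le (add_le_add_right (le_max_left _ _) _) (by positivity)
  calc _ ≤ cosh (ε * Y) - 1 := by linarith
    _ ≤ ε ^ 2 * (cosh Y - 1) := cosh_mul_sub_one_le hε0 hε Y
    _ ≤ _ := by gcongr

lemma sq_exp_sub_exp_div (a b : ℝ) :
    (exp a - exp b) ^ 2 / (4 * exp a * exp b) = (cosh (a - b) - 1) / 2 := by
  rw [cosh_eq, exp_sub, neg_sub, exp_sub]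
  field_simp
  ring

theorem h_out_in_F_general (V : Type*) (adj : V → V → Prop) (dν : V → V → ℝ) (ρ : V → ℝ) (τ : ℝ)
    (hτ : 0 < τ)
    (hlip : ∀ x y, adj x y → |ρ x - ρ y| ≤ dν x y)
    (hd1 : ∀ x y, adj x y → dν x y ≤ 1) :
    ∀ t : ℝ, 0 ≤ t → ∀ y z, adj y z →
      (fun h : ℝ → V → ℝ =>
        |h t y - h t z| ^ 2 / (4 * h t y * h t z) ≤
          - dν y z ^ 2 * deriv (fun s => Real.log (h s y)) t)
      (fun t w => Real.exp ((ρ w - Real.exp 1 / 4 * (t + τ)) *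
          Real.log (max 1 (ρ w / (Real.exp 1 / 4 * (t + τ)))) - t / τ)) := by
  intro t ht y z hadj
  simp only [log_exp, sub_mul_log_max_one_div_eq]
  set c := exp 1 / 4 * (t + τ)
  have hc : 0 < c := by positivity
  have hderiv : HasDerivAt
      (fun s => exp 1 / 4 * (s + τ) * subOneMulLogMaxOne (ρ y / (exp 1 / 4 * (s + τ))) - s / τ)
      (-(exp 1 / 4) * (log (max 1 (ρ y / c)) + max (ρ y / c - 1) 0) - 1 / τ) t :=
    (hasDerivAt_mul_subOneMulLogMaxOne_div (ρ y)
      ((((hasDerivAt_id t).add_const τ).const_mul _).congr_deriv (mul_one _)) hc.ne').sub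
      ((hasDerivAt_id t).div_const τ)
  have hcosh := cosh_mul_subOneMulLogMaxOne_div_sub_sub_one_le hc (hlip y z hadj) (hd1 y z hadj)
  have hslack : exp 1 / 2 / c ≤ 2 / τ := by
    rw [div_le_div_iff₀ hc hτ, show c = exp 1 / 4 * (t + τ) from rfl]
    nlinarith [mul_nonneg (exp_pos 1).le ht]
  have hlog : 0 ≤ log (max 1 (ρ y / c)) := log_nonneg (le_max_left _ _)
  rw [hderiv.deriv, sq_abs, sq_exp_sub_exp_div, sub_sub_sub_cancel_right]
  linear_combination hcosh / 2 + mul_le_mul_of_nonneg_left hslack (sq_nonneg (dν y z)) / 2 +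
    mul_nonneg (sq_nonneg (dν y z)) (mul_nonneg (exp_pos 1).le hlog) / 4

/-- The function
h(t,z) = exp{(ρ(z) − (e/4)(t+τ)) log(max(1, ρ(z)/((e/4)(t+τ)))) − t/τ}
satisfies the key inequality of the Integral Maximum Principle. -/
theorem h_out_in_F (V : Type*) (adj : V → V → Prop) (dν : V → V → ℝ) (ρ : V → ℝ) (τ : ℝ)
    (hτ : 0 < τ)
    (hρnn : ∀ x, 0 ≤ ρ x) (hdnn : ∀ x y, 0 ≤ dν x y)
    (hlip : ∀ x y, adj x y → |ρ x - ρ y| ≤ dν x y)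
    (hd1 : ∀ x y, adj x y → dν x y ≤ 1) :
    ∀ t : ℝ, 0 ≤ t → ∀ y z, adj y z →
      (fun h : ℝ → V → ℝ =>
        |h t y - h t z| ^ 2 / (4 * h t y * h t z) ≤
          - dν y z ^ 2 * deriv (fun s => Real.log (h s y)) t)
      (fun t w => Real.exp ((ρ w - Real.exp 1 / 4 * (t + τ)) *
          Real.log (max 1 (ρ w / (Real.exp 1 / 4 * (t + τ)))) - t / τ)) :=
  h_out_in_F_general V adj dν ρ τ hτ hlip hd1
end
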